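/- Let E = (E₀,E₁) and F = (F₀,F₁) be couples of complex Banach spaces with E₁ ↪ E₀ and F₁ ↪ F₀, let N be a (possibly nonlinear) map from E₀ to F₀ mapping the Calderón space 𝓕(E₀,E₁) into 𝓕(F₀,F₁) and satisfying ‖N(a)‖_{F_j} ≤ μ(‖a‖_{E_j}) for j = 0,1 and a ∈ E_j, where μ : ℝ_{≥0} → ℝ_{>0} is continuous and nondecreasing. Then for every θ ∈ (0,1) and a ∈ E_θ (complex interpolation space), N(a) ∈ F_θ and ‖N(a)‖_{F_θ} ≤ μ(‖a‖_{E_θ}). -/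
import Mathlib


open Filter Topology

/-- An element of the Calderón space 𝓕(E₀,E₁) attached to a continuous embedding
`ι : E₁ →L[ℂ] E₀`: a function on the strip `0 ≤ Re z ≤ 1`, continuous with values in
`E₀ = E₀ + E₁`, analytic in the open strip, whose boundary values on `Re z = j` lie in
`E_j`, are continuous there and vanish at infinity. -/
structure CalderonFn {E₀ E₁ : Type*} [NormedAddCommGroup E₀] [NormedSpace ℂ E₀]
    [NormedAddCommGroup E₁] [NormedSpace ℂ E₁] (ι : E₁ →L[ℂ] E₀) where
  toFun : ℂ → E₀
  continuousOn : ContinuousOn toFun {z : ℂ | 0 ≤ z.re ∧ z.re ≤ 1}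
  differentiableOn : DifferentiableOn ℂ toFun {z : ℂ | 0 < z.re ∧ z.re < 1}
  bdry0_cont : Continuous fun t : ℝ => toFun (t * Complex.I)
  bdry0_zero : Tendsto (fun t : ℝ => toFun (t * Complex.I)) (cocompact ℝ) (𝓝 0)
  bdry1 : ℝ → E₁
  bdry1_eq : ∀ t : ℝ, toFun (1 + t * Complex.I) = ι (bdry1 t)
  bdry1_cont : Continuous bdry1
  bdry1_zero : Tendsto bdry1 (cocompact ℝ) (𝓝 0)

/-- The norm `‖f‖_𝓕 = max_j sup_t ‖f(j+it)‖_{E_j}`. -/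
noncomputable def calderonNorm {E₀ E₁ : Type*} [NormedAddCommGroup E₀]
    [NormedSpace ℂ E₀] [NormedAddCommGroup E₁] [NormedSpace ℂ E₁]
    {ι : E₁ →L[ℂ] E₀} (f : CalderonFn ι) : ℝ :=
  max (⨆ t : ℝ, ‖f.toFun (t * Complex.I)‖) (⨆ t : ℝ, ‖f.bdry1 t‖)

/-- Membership in the complex interpolation space `E_θ = {f(θ) : f ∈ 𝓕(E₀,E₁)}`. -/
def interpMem {E₀ E₁ : Type*} [NormedAddCommGroup E₀] [NormedSpace ℂ E₀]
    [NormedAddCommGroup E₁] [NormedSpace ℂ E₁] (ι : E₁ →L[ℂ] E₀) (θ : ℝ)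
    (a : E₀) : Prop :=
  ∃ f : CalderonFn ι, f.toFun (θ : ℂ) = a

/-- The quotient norm `‖a‖_θ = inf {‖f‖_𝓕 : f(θ) = a}` on the interpolation space. -/
noncomputable def interpNorm {E₀ E₁ : Type*} [NormedAddCommGroup E₀]
    [NormedSpace ℂ E₀] [NormedAddCommGroup E₁] [NormedSpace ℂ E₁]
    (ι : E₁ →L[ℂ] E₀) (θ : ℝ) (a : E₀) : ℝ :=
  sInf {r : ℝ | ∃ f : CalderonFn ι, f.toFun (θ : ℂ) = a ∧ calderonNorm f ≤ r}


section Aux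

lemma bddAbove_range_of_cocompact {h : ℝ → ℝ} (hc : Continuous h)
    (hz : Tendsto h (cocompact ℝ) (𝓝 0)) : BddAbove (Set.range h) := by
  obtain ⟨K, hK, hK1⟩ := hasBasis_cocompact.eventually_iff.mp
    (hz.eventually_lt_const (zero_lt_one))
  obtain ⟨M, hM⟩ := (hK.image hc).bddAbove
  refine ⟨max M 1, ?_⟩
  rintro x ⟨t, rfl⟩
  by_cases ht : t ∈ K
  · exact le_max_of_le_left (hM ⟨t, ht, rfl⟩)
  · exact le_max_of_le_right (hK1 ht).le

variable {E₀ E₁ : Type*} [NormedAddCommGroup E₀] [NormedSpace ℂ E₀]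
    [NormedAddCommGroup E₁] [NormedSpace ℂ E₁] {ι : E₁ →L[ℂ] E₀}

lemma norm_le_calderonNorm₀ (f : CalderonFn ι) (t : ℝ) :
    ‖f.toFun (t * Complex.I)‖ ≤ calderonNorm f := by
  refine le_max_of_le_left (le_ciSup (f := fun t : ℝ => ‖f.toFun (t * Complex.I)‖) ?_ t)
  exact bddAbove_range_of_cocompact f.bdry0_cont.norm (by simpa using f.bdry0_zero.norm)

lemma norm_le_calderonNorm₁ (f : CalderonFn ι) (t : ℝ) :
    ‖f.bdry1 t‖ ≤ calderonNorm f := by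
  refine le_max_of_le_right (le_ciSup (f := fun t : ℝ => ‖f.bdry1 t‖) ?_ t)
  exact bddAbove_range_of_cocompact f.bdry1_cont.norm (by simpa using f.bdry1_zero.norm)

lemma calderonNorm_nonneg (f : CalderonFn ι) : 0 ≤ calderonNorm f :=
  (norm_nonneg _).trans (norm_le_calderonNorm₀ f 0)

end Aux

theorem stmt16 {E₀ E₁ F₀ F₁ : Type*}
    [NormedAddCommGroup E₀] [NormedSpace ℂ E₀] [CompleteSpace E₀]
    [NormedAddCommGroup E₁] [NormedSpace ℂ E₁] [CompleteSpace E₁]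
    [NormedAddCommGroup F₀] [NormedSpace ℂ F₀] [CompleteSpace F₀]
    [NormedAddCommGroup F₁] [NormedSpace ℂ F₁] [CompleteSpace F₁]
    (ιE : E₁ →L[ℂ] E₀) (ιF : F₁ →L[ℂ] F₀)
    (hιE : Function.Injective ιE) (hιF : Function.Injective ιF)
    (N : E₀ → F₀) (μ : ℝ → ℝ)
    (hμcont : Continuous μ) (hμpos : ∀ r : ℝ, 0 ≤ r → 0 < μ r) (hμmono : Monotone μ)
    (hmap : ∀ f : CalderonFn ιE,
      ∃ g : CalderonFn ιF, g.toFun = fun z => N (f.toFun z))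
    (h0 : ∀ a : E₀, ‖N a‖ ≤ μ ‖a‖)
    (h1 : ∀ a : E₁, ∃ b : F₁, ιF b = N (ιE a) ∧ ‖b‖ ≤ μ ‖a‖)
    (θ : ℝ) (hθ : θ ∈ Set.Ioo (0:ℝ) 1) (a : E₀) (ha : interpMem ιE θ a) :
    interpMem ιF θ (N a) ∧ interpNorm ιF θ (N a) ≤ μ (interpNorm ιE θ a) := by
  obtain ⟨f₀, hf₀⟩ := ha
  -- for every admissible f, a bound on interpNorm of N a
  have key : ∀ f : CalderonFn ιE, f.toFun (θ : ℂ) = a →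
      ∃ g : CalderonFn ιF, g.toFun (θ : ℂ) = N a ∧ calderonNorm g ≤ μ (calderonNorm f) := by
    intro f hf
    obtain ⟨g, hg⟩ := hmap f
    refine ⟨g, by rw [hg]; simp [hf], ?_⟩
    refine max_le (ciSup_le fun t => ?_) (ciSup_le fun t => ?_)
    · calc ‖g.toFun (t * Complex.I)‖ = ‖N (f.toFun (t * Complex.I))‖ := by rw [hg]
        _ ≤ μ ‖f.toFun (t * Complex.I)‖ := h0 _
        _ ≤ μ (calderonNorm f) := hμmono (norm_le_calderonNorm₀ f t)
    · obtain ⟨b, hb, hble⟩ := h1 (f.bdry1 t)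
      have : ιF (g.bdry1 t) = ιF b := by
        rw [← g.bdry1_eq t, hg, hb, ← f.bdry1_eq t]
      rw [hιF this]
      exact hble.trans (hμmono (norm_le_calderonNorm₁ f t))
  have hbddF : BddBelow {r : ℝ | ∃ g : CalderonFn ιF,
      g.toFun (θ : ℂ) = N a ∧ calderonNorm g ≤ r} := by
    refine ⟨0, fun r ⟨g, _, hgr⟩ => (calderonNorm_nonneg g).trans hgr⟩
  have main : ∀ r : ℝ, (∃ f : CalderonFn ιE, f.toFun (θ : ℂ) = a ∧ calderonNorm f ≤ r) →
      interpNorm ιF θ (N a) ≤ μ r := by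
    rintro r ⟨f, hf, hfr⟩
    obtain ⟨g, hg, hgle⟩ := key f hf
    exact csInf_le hbddF ⟨g, hg, hgle.trans (hμmono hfr)⟩
  constructor
  · obtain ⟨g, hg, -⟩ := key f₀ hf₀
    exact ⟨g, hg⟩
  · set S : Set ℝ := {r : ℝ | ∃ f : CalderonFn ιE, f.toFun (θ : ℂ) = a ∧ calderonNorm f ≤ r}
    have hSne : S.Nonempty := ⟨calderonNorm f₀, f₀, hf₀, le_rfl⟩
    have hSbdd : BddBelow S :=
      ⟨0, fun r ⟨f, _, hfr⟩ => (calderonNorm_nonneg f).trans hfr⟩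
    have hSeq : interpNorm ιE θ a = sInf S := rfl
    rw [hSeq, hμmono.map_csInf_of_continuousAt hμcont.continuousAt hSne hSbdd]
    exact le_csInf (hSne.image μ) (by rintro b ⟨r, hr, rfl⟩; exact main r hr)
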